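/- Let k be a nonarchimedean local field with normalized valuation v and residue characteristic not equal to 2, let E be an elliptic curve over k given by y² = c·x(x−1)(x−λ) with v(c) = v(λ) = v(λ−1) = 0 and λ ≠ 0, 1. Then E(k) ≠ 2·E(k), i.e., the multiplication-by-2 map on k-points is not surjective. -/

import Mathlib

/-!
Suppose `E(k) = 2E(k)` and pick halves `Q₀ = (0, 0)`, `2 Q_{n+1} = Q_n`. The duplication formula
`x(2P) · (4x³ + b₂x² + 2b₄x + b₆) = x⁴ - b₄x² - 2b₆x - b₈` shows that a point whose double has
integral `x`-coordinate is itself integral, so every `Q_n` is integral, and so is `Q_n - Q_m` for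
`m < n`, being a `2ⁿ`-th root of `Q₀`. As the residue field is finite, two such `Q_n`, `Q_m` have
the same reduction. The chord through `Q_n` and `-Q_m` then has integral slope, and reducing the
chord relations shows that both partial derivatives of the Weierstrass equation vanish at the
common reduction, which is impossible on the smooth reduced curve.
-/

open IsLocalization (IsInteger)

namespace ValuationRing

variable {O K : Type*} [CommRing O] [IsDomain O] [ValuationRing O] [Field K] [Algebra O K]
  [IsFractionRing O K]

theorem isInteger_of_forall_mul_eq_one_isUnit {x : K}
    (h : ∀ τ : O, algebraMap O K τ * x = 1 → IsUnit τ) : IsInteger O x := by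
  obtain hx | ⟨τ, hτ⟩ := isInteger_or_isInteger O x
  · exact hx
  rcases eq_or_ne x 0 with rfl | hx
  · exact ⟨0, map_zero _⟩
  obtain ⟨u, rfl⟩ := h τ (by rw [hτ, inv_mul_cancel₀ hx])
  refine ⟨↑u⁻¹, ?_⟩
  rw [← mul_one (algebraMap O K _), ← inv_mul_cancel₀ hx, ← hτ, ← mul_assoc, ← map_mul]
  simp

theorem isInteger_of_isInteger_sq_add_mul {a t : K} (ha : IsInteger O a)
    (ht : IsInteger O (t ^ 2 + a * t)) : IsInteger O t := by
  obtain ⟨α, rfl⟩ := ha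
  obtain ⟨β, hβ⟩ := ht
  refine isInteger_of_forall_mul_eq_one_isUnit fun τ hτ ↦ IsUnit.of_mul_eq_one (τ * β - α) ?_
  apply IsFractionRing.injective O K
  simp only [map_mul, map_sub, map_one, hβ]
  linear_combination (algebraMap O K τ * t + 1 + algebraMap O K α * algebraMap O K τ) * hτ

end ValuationRing

namespace WeierstrassCurve

open WeierstrassCurve.Affine

theorem Affine.addX_slope_self_mul {F : Type*} [Field F] [DecidableEq F] {W : Affine F}
    {x y : F} (h : W.Equation x y) (hy : y ≠ W.negY x y) :
    W.addX x x (W.slope x x y y) * (4 * x ^ 3 + W.b₂ * x ^ 2 + 2 * W.b₄ * x + W.b₆) =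
      x ^ 4 - W.b₄ * x ^ 2 - 2 * W.b₆ * x - W.b₈ := by
  have hℓ := div_mul_cancel₀ (3 * x ^ 2 + 2 * W.a₂ * x + W.a₄ - W.a₁ * y) (sub_ne_zero.mpr hy)
  rw [← slope_of_Y_ne rfl hy] at hℓ
  rw [equation_iff] at h
  simp only [addX, negY, b₂, b₄, b₆, b₈] at hℓ ⊢
  set ℓ := W.slope x x y y
  linear_combination
    (ℓ * (2 * y + W.a₁ * x + W.a₃) + (3 * x ^ 2 + 2 * W.a₂ * x + W.a₄ - W.a₁ * y) +
      W.a₁ * (2 * y + W.a₁ * x + W.a₃)) * hℓ -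
    (4 * (ℓ ^ 2 + W.a₁ * ℓ - W.a₂ - x - x) + W.a₁ ^ 2 + 4 * W.a₂ + 8 * x) * h

/-- The chord through `(u₁, v₁)` and `-(u₂, v₂)` has no integral slope when the two points have
the same reduction: otherwise both partial derivatives vanish at that reduction. -/
theorem Affine.mul_sub_ne_sub_negY_of_residue_eq {R : Type*} [CommRing R] [IsLocalRing R]
    [IsDomain R] {W : WeierstrassCurve R} [W.IsElliptic] {u₁ v₁ u₂ v₂ : R}
    (h₁ : W.toAffine.Equation u₁ v₁) (h₂ : W.toAffine.Equation u₂ v₂)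
    (hu : IsLocalRing.residue R u₁ = IsLocalRing.residue R u₂)
    (hv : IsLocalRing.residue R v₁ = IsLocalRing.residue R v₂) (hne : u₁ ≠ u₂) (M : R) :
    M * (u₁ - u₂) ≠ v₁ - W.toAffine.negY u₂ v₂ := by
  intro hM
  set r := IsLocalRing.residue R
  have hred : (W.map r).toAffine.Nonsingular (r u₁) (r v₁) :=
    equation_iff_nonsingular.mp (h₁.map r)
  rw [equation_iff] at h₁ h₂
  simp only [negY] at hM
  have hM' : (v₁ - v₂) * (M + W.a₁) =
      u₁ ^ 2 + u₁ * u₂ + u₂ ^ 2 + W.a₂ * (u₁ + u₂) + W.a₄ - W.a₁ * v₂ :=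
    mul_left_cancel₀ (sub_ne_zero.mpr hne) (by linear_combination (v₁ - v₂) * hM + h₁ - h₂)
  replace hM := congrArg r hM
  replace hM' := congrArg r hM'
  simp only [map_add, map_sub, map_mul, map_pow, map_neg] at hM hM'
  rw [nonsingular_iff'] at hred
  simp only [map_a₁, map_a₂, map_a₃, map_a₄] at hred
  obtain ⟨-, hX | hY⟩ := hred
  · exact hX (by linear_combination hM' - r M * hv - (r u₂ + 2 * r u₁ + r W.a₂) * hu)
  · exact hY (by linear_combination -hM + (r M + r W.a₁) * hu + hv)

section ofRoots

variable {R : Type*} [CommRing R]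

def ofRoots (e₁ e₂ : R) : WeierstrassCurve R :=
  ⟨0, -(e₁ + e₂), 0, e₁ * e₂, 0⟩

theorem ofRoots_Δ (e₁ e₂ : R) : (ofRoots e₁ e₂).Δ = 16 * (e₁ * e₂ * (e₁ - e₂)) ^ 2 := by
  simp only [ofRoots, Δ, b₂, b₄, b₆, b₈]
  ring

theorem isElliptic_ofRoots {e₁ e₂ : R} (h2 : IsUnit (2 : R))
    (he : IsUnit (e₁ * e₂ * (e₁ - e₂))) : (ofRoots e₁ e₂).IsElliptic :=
  ⟨by rw [ofRoots_Δ, show (16 : R) = 2 ^ 4 by norm_num]; exact (h2.pow 4).mul (he.pow 2)⟩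

end ofRoots

section IntegralPoints

variable {O : Type*} [CommRing O] [IsDomain O] [ValuationRing O]
  {K : Type*} [Field K] [Algebra O K] [IsFractionRing O K] (W : WeierstrassCurve O)

variable (O) in
def IsIntegralPoint (P : (W⁄K).toAffine.Point) : Prop :=
  ∃ (u v : O) (h : (W⁄K).toAffine.Nonsingular (algebraMap O K u) (algebraMap O K v)),
    P = .some _ _ h

variable {W}

theorem isInteger_of_equation {x y : K} (h : (W⁄K).toAffine.Equation x y)
    (hx : IsInteger O x) : IsInteger O y := by
  obtain ⟨u, rfl⟩ := hx
  refine ValuationRing.isInteger_of_isInteger_sq_add_mul (a := algebraMap O K (W.a₁ * u + W.a₃))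
    ⟨_, rfl⟩ ⟨u ^ 3 + W.a₂ * u ^ 2 + W.a₄ * u + W.a₆, ?_⟩
  rw [equation_iff] at h
  simp only [map_add, map_mul, map_pow, baseChange, map_a₁, map_a₂, map_a₃, map_a₄, map_a₆] at h ⊢
  linear_combination -h

variable [DecidableEq K]

theorem IsIntegralPoint.of_two_smul {P : (W⁄K).toAffine.Point}
    (hP : IsIntegralPoint O W (2 • P)) : IsIntegralPoint O W P := by
  rcases P with _ | ⟨x, y, h⟩
  · obtain ⟨_, _, h₀, h2P⟩ := hP
    exact absurd h2P.symm (Point.some_ne_zero h₀)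
  obtain ⟨ξ, _, _, h2P⟩ := hP
  have hy : y ≠ (W⁄K).toAffine.negY x y := fun hy ↦ by
    rw [two_smul, Point.add_self_of_Y_eq hy] at h2P
    exact Point.some_ne_zero _ h2P.symm
  rw [two_smul, Point.add_self_of_Y_ne hy, Point.some.injEq] at h2P
  have hdouble := addX_slope_self_mul h.1 hy
  rw [h2P.1] at hdouble
  simp only [baseChange, map_b₂, map_b₄, map_b₆, map_b₈] at hdouble
  -- If `τ x = 1` with `τ ∈ O`, the duplication formula times `τ⁴` exhibits `τ` as a unit.
  have hx : IsInteger O x := ValuationRing.isInteger_of_forall_mul_eq_one_isUnit fun τ hτ ↦ by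
    refine IsUnit.of_mul_eq_one (ξ * (4 + W.b₂ * τ + 2 * W.b₄ * τ ^ 2 + W.b₆ * τ ^ 3) +
      W.b₄ * τ + 2 * W.b₆ * τ ^ 2 + W.b₈ * τ ^ 3) ?_
    apply IsFractionRing.injective O K
    simp only [map_add, map_mul, map_pow, map_ofNat, map_one]
    set T := algebraMap O K τ
    set t := T * x
    linear_combination T ^ 4 * hdouble +
      (t ^ 3 + t ^ 2 + t + 1 - 4 * algebraMap O K ξ * T * (1 + t + t ^ 2) -
        (algebraMap O K ξ * algebraMap O K W.b₂ + algebraMap O K W.b₄) * T ^ 2 * (1 + t) -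
        2 * (algebraMap O K ξ * algebraMap O K W.b₄ + algebraMap O K W.b₆) * T ^ 3) * hτ
  obtain ⟨v, rfl⟩ := isInteger_of_equation h.1 hx
  obtain ⟨u, rfl⟩ := hx
  exact ⟨u, v, h, rfl⟩

theorem IsIntegralPoint.of_two_pow_smul {P : (W⁄K).toAffine.Point} (n : ℕ)
    (hP : IsIntegralPoint O W (2 ^ n • P)) : IsIntegralPoint O W P := by
  induction n generalizing P with
  | zero => simpa using hP
  | succ n ih => exact (ih (by rwa [pow_succ, mul_smul] at hP)).of_two_smul

variable [W.IsElliptic]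

theorem eq_neg_of_residue_eq {u₁ v₁ u₂ v₂ : O}
    (h₁ : (W⁄K).toAffine.Nonsingular (algebraMap O K u₁) (algebraMap O K v₁))
    (h₂ : (W⁄K).toAffine.Nonsingular (algebraMap O K u₂) (algebraMap O K v₂))
    (hu : IsLocalRing.residue O u₁ = IsLocalRing.residue O u₂)
    (hv : IsLocalRing.residue O v₁ = IsLocalRing.residue O v₂)
    (hsub : IsIntegralPoint O W (Point.some _ _ h₁ - Point.some _ _ h₂)) :
    Point.some _ _ h₁ = -Point.some _ _ h₂ := by
  have hinj := IsFractionRing.injective O K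
  by_cases hx : u₁ = u₂
  · subst hx
    refine (Point.X_eq_iff.mp rfl).resolve_left fun heq ↦ ?_
    obtain ⟨_, _, h₀, h0⟩ := hsub
    rw [heq, sub_self] at h0
    exact Point.some_ne_zero h₀ h0.symm
  exfalso
  obtain ⟨ξ, _, _, hD⟩ := hsub
  rw [sub_eq_add_neg, Point.neg_some, Point.add_of_X_ne (hinj.ne hx), Point.some.injEq] at hD
  set μ := (W⁄K).toAffine.slope (algebraMap O K u₁) (algebraMap O K u₂) (algebraMap O K v₁)
    ((W⁄K).toAffine.negY (algebraMap O K u₂) (algebraMap O K v₂))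
  obtain ⟨M, hM⟩ : IsInteger O μ := by
    refine ValuationRing.isInteger_of_isInteger_sq_add_mul (a := algebraMap O K W.a₁) ⟨_, rfl⟩
      ⟨ξ + W.a₂ + u₁ + u₂, ?_⟩
    simp only [addX, baseChange, map_a₁, map_a₂] at hD
    simp only [map_add]
    linear_combination -hD.1
  refine mul_sub_ne_sub_negY_of_residue_eq ((map_equation _ hinj _ _).mp h₁.1)
    ((map_equation _ hinj _ _).mp h₂.1) hu hv hx M (hinj ?_)
  have hμ := div_mul_cancel₀ (algebraMap O K v₁ - (W⁄K).toAffine.negY (algebraMap O K u₂)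
    (algebraMap O K v₂)) (sub_ne_zero.mpr (hinj.ne hx))
  rw [← slope_of_X_ne (hinj.ne hx)] at hμ
  rw [map_mul, map_sub, hM, hμ, map_sub]
  exact congrArg _ (map_negY ..)

theorem not_surjective_two_smul [Finite (IsLocalRing.ResidueField O)]
    {P₀ : (W⁄K).toAffine.Point} (hP₀ : IsIntegralPoint O W P₀) (h2P₀ : 2 • P₀ = 0) :
    ¬ Function.Surjective (fun P : (W⁄K).toAffine.Point ↦ 2 • P) := by
  intro hsurj
  choose half hhalf using hsurj
  replace hhalf (P) : 2 • half P = P := hhalf P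
  set Q : ℕ → (W⁄K).toAffine.Point := fun n ↦ half^[n] P₀
  have hQ (n : ℕ) : 2 ^ n • Q n = P₀ := by
    induction n with
    | zero => simp [Q]
    | succ n ih =>
      rwa [pow_succ, mul_smul, show Q (n + 1) = half (Q n) from
        Function.iterate_succ_apply' .., hhalf]
  have hQ_zero {m n : ℕ} (hmn : m < n) : 2 ^ n • Q m = 0 := by
    obtain ⟨k, rfl⟩ := Nat.exists_eq_add_of_lt hmn
    rw [show 2 ^ (m + k + 1) = 2 ^ k * 2 * 2 ^ m by ring, mul_smul, mul_smul, hQ, h2P₀, smul_zero]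
  choose u v h hQuv using fun n ↦ IsIntegralPoint.of_two_pow_smul n ((hQ n).symm ▸ hP₀)
  obtain ⟨m, n, hmn, huv⟩ := Finite.exists_ne_map_eq_of_infinite
    fun n ↦ (IsLocalRing.residue O (u n), IsLocalRing.residue O (v n))
  wlog hlt : m < n generalizing m n
  · exact this n m hmn.symm huv.symm (hmn.lt_or_gt.resolve_left hlt)
  obtain ⟨hu, hv⟩ := Prod.ext_iff.mp huv
  have hsub : IsIntegralPoint O W (Q n - Q m) :=
    .of_two_pow_smul n (by rwa [smul_sub, hQ, hQ_zero hlt, sub_zero])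
  rw [hQuv n, hQuv m] at hsub
  have hneg := eq_neg_of_residue_eq (h n) (h m) hu.symm hv.symm hsub
  obtain ⟨_, _, h₀, rfl⟩ := hP₀
  apply Point.some_ne_zero h₀
  rw [← hQ n, hQuv n, hneg, ← hQuv m, smul_neg, hQ_zero hlt, neg_zero]

end IntegralPoints

theorem not_surjective_two_smul_ofRoots {O : Type*} [CommRing O] [IsDomain O] [ValuationRing O]
    [Finite (IsLocalRing.ResidueField O)] {K : Type*} [Field K] [Algebra O K]
    [IsFractionRing O K] [DecidableEq K] {e₁ e₂ : O} (h2 : IsUnit (2 : O))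
    (he : IsUnit (e₁ * e₂ * (e₁ - e₂))) :
    ¬ Function.Surjective (fun P : ((ofRoots e₁ e₂)⁄K).toAffine.Point ↦ 2 • P) := by
  have := isElliptic_ofRoots h2 he
  have : ((ofRoots e₁ e₂)⁄K).IsElliptic := inferInstanceAs (WeierstrassCurve.map _ _).IsElliptic
  have h₀ : ((ofRoots e₁ e₂)⁄K).toAffine.Nonsingular (algebraMap O K 0) (algebraMap O K 0) :=
    equation_iff_nonsingular.mp (by simp [ofRoots])
  refine not_surjective_two_smul ⟨0, 0, h₀, rfl⟩ ?_
  rw [two_smul]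
  exact Point.add_self_of_Y_eq (by simp [ofRoots])

end WeierstrassCurve

open Classical in
theorem stmt3_general (O : Type*) [CommRing O] [IsDomain O] [IsDiscreteValuationRing O]
    [Finite (IsLocalRing.ResidueField O)]
    (hchar : ringChar (IsLocalRing.ResidueField O) ≠ 2)
    (K : Type*) [Field K] [Algebra O K] [IsFractionRing O K]
    (c l : K)
    (hc : ∃ u : Oˣ, algebraMap O K (u : O) = c)
    (hlu : ∃ u : Oˣ, algebraMap O K (u : O) = l)
    (hlu1 : ∃ u : Oˣ, algebraMap O K (u : O) = l - 1)
    (W : WeierstrassCurve.Affine K)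
    (hW : W = { a₁ := 0, a₂ := -(c + c * l), a₃ := 0, a₄ := c ^ 2 * l, a₆ := 0 }) :
    ¬ Function.Surjective (fun P : W.Point => 2 • P) := by
  obtain ⟨C, rfl⟩ := hc
  obtain ⟨L, rfl⟩ := hlu
  obtain ⟨L₁, hL₁⟩ := hlu1
  replace hL₁ : (L₁ : O) = L - 1 := IsFractionRing.injective O K (by simp [hL₁])
  have h2 : IsUnit (2 : O) :=
    (IsLocalRing.residue_ne_zero_iff_isUnit 2).mp (by rw [map_ofNat]; exact Ring.two_ne_zero hchar)
  have he : IsUnit ((C : O) * (C * L) * (C - C * L)) := by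
    rw [show (C : O) * (C * L) * (C - C * L) = -(C ^ 3 * L * L₁) by rw [hL₁]; ring]
    exact (((C.isUnit.pow 3).mul L.isUnit).mul L₁.isUnit).neg
  obtain rfl : W = (WeierstrassCurve.ofRoots (C : O) (C * L)).baseChange K := by
    subst hW
    ext <;> simp [WeierstrassCurve.ofRoots]
    ring
  exact WeierstrassCurve.not_surjective_two_smul_ofRoots h2 he

open Classical in
/-- Let `k` be a nonarchimedean local field of residue characteristic `≠ 2`,
realized as the fraction field `K` of its ring of integers `O` (a complete DVR with finite
residue field of odd characteristic). Let `E` be the elliptic curve over `k` given by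
`y² = c·x(x−1)(x−λ)` with `v(c) = v(λ) = v(λ−1) = 0` (i.e. `c`, `λ`, `λ−1` are units of `O`)
and `λ ≠ 0, 1`; we use the isomorphic Weierstrass model `Y² = X(X−c)(X−cλ)` obtained by
`(X, Y) = (cx, cy)`. Then `E(k) ≠ 2·E(k)`, i.e. multiplication by 2 on `k`-points is not
surjective. -/
theorem stmt3 (O : Type*) [CommRing O] [IsDomain O] [IsDiscreteValuationRing O]
    [IsAdicComplete (IsLocalRing.maximalIdeal O) O]
    [Finite (IsLocalRing.ResidueField O)]
    (hchar : ringChar (IsLocalRing.ResidueField O) ≠ 2)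
    (K : Type*) [Field K] [Algebra O K] [IsFractionRing O K]
    (c l : K) (hl0 : l ≠ 0) (hl1 : l ≠ 1)
    (hc : ∃ u : Oˣ, algebraMap O K (u : O) = c)
    (hlu : ∃ u : Oˣ, algebraMap O K (u : O) = l)
    (hlu1 : ∃ u : Oˣ, algebraMap O K (u : O) = l - 1)
    (W : WeierstrassCurve.Affine K)
    (hW : W = { a₁ := 0, a₂ := -(c + c * l), a₃ := 0, a₄ := c ^ 2 * l, a₆ := 0 }) :
    ¬ Function.Surjective (fun P : W.Point => 2 • P) :=
  stmt3_general O hchar K c l hc hlu hlu1 W hW
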